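/- arXiv:2107.01843 — 4 statements merged into one kernel-verified Lean document; each statement's English description precedes it below -/
import Mathlib

section
/- Let μ > 0 and k > 0 be real parameters, and let S ≥ 0, X ≥ 0 be reals with k·X + S > 0, and let T be a real number. Then T ≤ μ·S·X/(k·X + S) holds if and only if the second-order-cone constraint √((μ·S)² + (k·T)² + (μ·k·X)²) ≤ μ·k·X + μ·S − k·T holds. -/
/-- SOC representation of the Contois growth constraint:
for `μ, k > 0`, `S, X ≥ 0` with `k*X + S > 0`, the constraint
`T ≤ μ*S*X/(k*X + S)` is equivalent to the second-order cone constraint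
`‖(μ*S, k*T, μ*k*X)‖ ≤ μ*k*X + μ*S - k*T`. -/
theorem contois_soc (μ k S X T : ℝ) (hμ : 0 < μ) (hk : 0 < k)
    (hS : 0 ≤ S) (hX : 0 ≤ X) (hpos : 0 < k * X + S) :
    T ≤ μ * S * X / (k * X + S) ↔
      Real.sqrt ((μ * S) ^ 2 + (k * T) ^ 2 + (μ * k * X) ^ 2) ≤
        μ * k * X + μ * S - k * T := by
  rw [le_div_iff₀ hpos]
  constructor
  · intro h
    have hba : k * T ≤ μ * S := by nlinarith [mul_nonneg hμ.le hS]
    have hbc : k * T ≤ μ * k * X := by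
      nlinarith [mul_le_mul_of_nonneg_left h hk.le,
        mul_nonneg (mul_nonneg hμ.le (mul_nonneg hk.le hk.le)) (mul_nonneg hX hX)]
    have hR : 0 ≤ μ * k * X + μ * S - k * T := by
      nlinarith [mul_nonneg hμ.le hS]
    have hsq : (μ * S) ^ 2 + (k * T) ^ 2 + (μ * k * X) ^ 2 ≤
        (μ * k * X + μ * S - k * T) ^ 2 := by
      nlinarith [mul_pos hμ hk]
    calc Real.sqrt ((μ * S) ^ 2 + (k * T) ^ 2 + (μ * k * X) ^ 2)
        ≤ Real.sqrt ((μ * k * X + μ * S - k * T) ^ 2) := Real.sqrt_le_sqrt hsq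
      _ = μ * k * X + μ * S - k * T := Real.sqrt_sq hR
  · intro h
    have hs : (0:ℝ) ≤ (μ * S) ^ 2 + (k * T) ^ 2 + (μ * k * X) ^ 2 := by positivity
    have h1 := Real.sq_sqrt hs
    have h2 : (Real.sqrt ((μ * S) ^ 2 + (k * T) ^ 2 + (μ * k * X) ^ 2)) ^ 2 ≤
        (μ * k * X + μ * S - k * T) ^ 2 :=
      pow_le_pow_left₀ (Real.sqrt_nonneg _) h 2
    nlinarith [mul_pos hμ hk]
end

section
/- Let μ > 0 and k > 0 be real parameters, let X̄ ≥ 0 and S ≥ 0 be reals, and let T be a real number. Then T ≤ μ·S·X̄/(k + S) holds if and only if the second-order-cone constraint √((μ·S·X̄)² + (k·T)² + (μ·k·X̄)²) ≤ μ·k·X̄ + μ·S·X̄ − k·T holds. -/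
/-- SOC representation of the Monod growth constraint with constant biomass:
for `μ, k > 0`, `X̄, S ≥ 0`, the constraint `T ≤ μ*S*X̄/(k + S)` is
equivalent to the second-order cone constraint
`‖(μ*S*X̄, k*T, μ*k*X̄)‖ ≤ μ*k*X̄ + μ*S*X̄ - k*T`. -/
theorem monod_soc (μ k Xbar S T : ℝ) (hμ : 0 < μ) (hk : 0 < k)
    (hX : 0 ≤ Xbar) (hS : 0 ≤ S) :
    T ≤ μ * S * Xbar / (k + S) ↔
      Real.sqrt ((μ * S * Xbar) ^ 2 + (k * T) ^ 2 + (μ * k * Xbar) ^ 2) ≤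
        μ * k * Xbar + μ * S * Xbar - k * T := by
  have hks : (0:ℝ) < k + S := by positivity
  rw [Real.sqrt_le_iff, le_div_iff₀ hks]
  constructor
  · intro h
    have hprod : 0 ≤ μ * k * Xbar * (μ * S * Xbar - T * (k + S)) := by
      have : 0 ≤ μ * S * Xbar - T * (k + S) := by linarith
      positivity
    constructor
    · nlinarith [mul_nonneg (mul_nonneg hμ.le hS) hX, mul_nonneg (mul_nonneg hμ.le hk.le) hX]
    · nlinarith [mul_nonneg (mul_nonneg hμ.le hS) hX, mul_nonneg (mul_nonneg hμ.le hk.le) hX,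
        mul_nonneg (mul_nonneg (mul_nonneg hμ.le hS) hX) hS,
        mul_nonneg (mul_nonneg (mul_nonneg hμ.le hS) hX) hk.le,
        mul_nonneg (mul_nonneg (mul_nonneg hμ.le hk.le) hX) hS,
        mul_nonneg (mul_nonneg (mul_nonneg hμ.le hk.le) hX) hk.le]
  · rintro ⟨h1, h2⟩
    rcases hX.eq_or_lt with hX0 | hX0
    · subst hX0
      have hT : k * T ≤ 0 := by nlinarith
      have hT0 : T ≤ 0 := nonpos_of_mul_nonpos_right (by linarith) hk
      nlinarith [mul_nonpos_of_nonpos_of_nonneg hT0 hks.le]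
    · have key : 0 ≤ μ * k * Xbar * (μ * S * Xbar - T * (k + S)) := by nlinarith
      have hpos : 0 < μ * k * Xbar := by positivity
      nlinarith [mul_pos hpos hks]
end

section
/- Let μ > 0, k > 0, and c > 0. The superlevel set {(S, X) ∈ ℝ² : S > 0, X ≥ 0, and μ·S·X/(k + S) ≥ c} is a convex subset of ℝ². -/
/-- Quasiconcavity of the Monod kinetic rate `h(S, X) = μ·S·X/(k + S)`:
for `μ, k, c > 0`, the superlevel set `{(S, X) : S > 0, X ≥ 0, h(S,X) ≥ c}`
is a convex subset of `ℝ²`. -/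
theorem monod_superlevel_convex (μ k c : ℝ) (hμ : 0 < μ) (hk : 0 < k) (hc : 0 < c) :
    Convex ℝ {p : ℝ × ℝ | 0 < p.1 ∧ 0 ≤ p.2 ∧ c ≤ μ * p.1 * p.2 / (k + p.1)} := by
  rintro ⟨s₁, x₁⟩ ⟨hs₁, hx₁, h₁⟩ ⟨s₂, x₂⟩ ⟨hs₂, hx₂, h₂⟩ a b ha hb hab
  simp only [Set.mem_setOf_eq] at *
  have hk₁ : (0:ℝ) < k + s₁ := by linarith
  have hk₂ : (0:ℝ) < k + s₂ := by linarith
  rw [le_div_iff₀ hk₁] at h₁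
  rw [le_div_iff₀ hk₂] at h₂
  have hA : c * k ≤ s₁ * (μ * x₁ - c) := by nlinarith
  have hB : c * k ≤ s₂ * (μ * x₂ - c) := by nlinarith
  have hu₁ : 0 < μ * x₁ - c := by nlinarith
  have hu₂ : 0 < μ * x₂ - c := by nlinarith
  have key : 2 * (c * k) ≤ s₁ * (μ * x₂ - c) + s₂ * (μ * x₁ - c) := by
    nlinarith [sq_nonneg (s₁ * (μ * x₂ - c) - s₂ * (μ * x₁ - c)),
      mul_le_mul hA hB (by positivity) (by positivity),
      mul_pos hs₁ hu₂, mul_pos hs₂ hu₁]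
  simp only [Prod.smul_mk, Prod.mk_add_mk, smul_eq_mul, Set.mem_setOf_eq]
  have hs : 0 < a * s₁ + b * s₂ := by
    rcases eq_or_lt_of_le ha with h | h
    · have hb1 : b = 1 := by linarith
      rw [← h, hb1]; simpa
    · positivity
  refine ⟨hs, by positivity, ?_⟩
  rw [le_div_iff₀ (by linarith : (0:ℝ) < k + (a * s₁ + b * s₂))]
  have hb' : b = 1 - a := by linarith
  subst hb'
  nlinarith [mul_nonneg (mul_nonneg ha ha) (by linarith : 0 ≤ s₁ * (μ * x₁ - c) - c * k),
    mul_nonneg (mul_nonneg hb hb) (by linarith : 0 ≤ s₂ * (μ * x₂ - c) - c * k),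
    mul_nonneg (mul_nonneg ha hb)
      (by linarith : 0 ≤ s₁ * (μ * x₂ - c) + s₂ * (μ * x₁ - c) - 2 * (c * k))]
end

section
/- Let τ ≥ 1 be an integer and Δ > 0. Let V̂ be an invertible n × n real matrix, K an n × r real matrix, and for each n ∈ {1, …, τ} let N̂(n) be an n × n real matrix, J(n) an r × n real matrix, g_φ(n) ∈ ℝʳ and g_ξ(n) ∈ ℝⁿ vectors, and suppose each matrix V̂/Δ − N̂(n)ᵀ − J(n)ᵀKᵀV̂ is invertible; define Γ(n) = (1/Δ)·(V̂/Δ − N̂(n)ᵀ − J(n)ᵀKᵀV̂)⁻¹·V̂. Suppose the vectors ρ(n) ∈ ℝʳ and λ(n) ∈ ℝⁿ satisfy the stationarity conditions: −ρ(n) = g_φ(n) + KᵀV̂λ(n) for all n ∈ {1,…,τ}; J(n)ᵀρ(n) = g_ξ(n) − (V̂/Δ − N̂(n)ᵀ)λ(n) + V̂λ(n+1)/Δ for all n ∈ {1,…,τ−1}; and J(τ)ᵀρ(τ) = g_ξ(τ) − (V̂/Δ − N̂(τ)ᵀ)λ(τ). Then for every n ∈ {1,…,τ}, ρ(n) = −g_φ(n)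 − Δ·KᵀV̂·∑_{k=n}^{τ} (∏_{l=n}^{k} Γ(l))·V̂⁻¹·(g_ξ(k) + J(k)ᵀ·g_φ(k)), where ∏_{l=n}^{k} Γ(l) = Γ(n)·Γ(n+1)···Γ(k). -/
open Matrix

/-- The ordered matrix product `Γ(a)·Γ(a+1)···Γ(b)`. -/
def prodIcc {m : ℕ} (Γ : ℕ → Matrix (Fin m) (Fin m) ℝ) (a b : ℕ) :
    Matrix (Fin m) (Fin m) ℝ :=
  ((List.range' a (b + 1 - a)).map Γ).prod

lemma prodIcc_self {m : ℕ} (Γ : ℕ → Matrix (Fin m) (Fin m) ℝ) (a : ℕ) :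
    prodIcc Γ a a = Γ a := by
  simp [prodIcc]

lemma prodIcc_cons {m : ℕ} (Γ : ℕ → Matrix (Fin m) (Fin m) ℝ) (a b : ℕ) (h : a < b) :
    prodIcc Γ a b = Γ a * prodIcc Γ (a + 1) b := by
  have h1 : b + 1 - a = (b - a) + 1 := by omega
  have h2 : b + 1 - (a + 1) = b - a := by omega
  rw [prodIcc, prodIcc, h1, h2, List.range'_succ, List.map_cons, List.prod_cons]

lemma mulVec_finset_sum {p q : ℕ} (M : Matrix (Fin p) (Fin q) ℝ) (s : Finset ℕ)
    (f : ℕ → Fin q → ℝ) :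
    M *ᵥ (∑ k ∈ s, f k) = ∑ k ∈ s, M *ᵥ f k := by
  have := map_sum M.mulVecLin f s
  simp only [Matrix.mulVecLin_apply] at this
  exact this

/-- Dual-multiplier formula for the transient exactness theorem: under the
stationarity conditions of the Lagrangian of the relaxed discretized problem,
the multiplier of the relaxed kinetics constraint satisfies
`ρ(n) = -g_φ(n) - Δ·KᵀV̂·∑_{k=n}^{τ} (∏_{l=n}^{k} Γ(l))·V̂⁻¹·(g_ξ(k) + J(k)ᵀ·g_φ(k))`,
where `Γ(n) = (1/Δ)·(V̂/Δ - N̂(n)ᵀ - J(n)ᵀKᵀV̂)⁻¹·V̂`. -/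
theorem transient_multiplier_formula {m r : ℕ} (τ : ℕ) (hτ : 1 ≤ τ)
    (Δ : ℝ) (hΔ : 0 < Δ)
    (V : Matrix (Fin m) (Fin m) ℝ) (hV : IsUnit V.det)
    (K : Matrix (Fin m) (Fin r) ℝ)
    (N : ℕ → Matrix (Fin m) (Fin m) ℝ)
    (J : ℕ → Matrix (Fin r) (Fin m) ℝ)
    (gφ : ℕ → Fin r → ℝ) (gξ : ℕ → Fin m → ℝ)
    (hinv : ∀ n ∈ Finset.Icc 1 τ,
      IsUnit (Δ⁻¹ • V - (N n)ᵀ - (J n)ᵀ * Kᵀ * V).det)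
    (Γ : ℕ → Matrix (Fin m) (Fin m) ℝ)
    (hΓ : ∀ n, Γ n = Δ⁻¹ • ((Δ⁻¹ • V - (N n)ᵀ - (J n)ᵀ * Kᵀ * V)⁻¹ * V))
    (ρ : ℕ → Fin r → ℝ) (lam : ℕ → Fin m → ℝ)
    (hstat1 : ∀ n ∈ Finset.Icc 1 τ, -ρ n = gφ n + (Kᵀ * V) *ᵥ lam n)
    (hstat2 : ∀ n, 1 ≤ n → n < τ →
      (J n)ᵀ *ᵥ ρ n =
        gξ n - (Δ⁻¹ • V - (N n)ᵀ) *ᵥ lam n + Δ⁻¹ • (V *ᵥ lam (n + 1)))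
    (hstat3 : (J τ)ᵀ *ᵥ ρ τ = gξ τ - (Δ⁻¹ • V - (N τ)ᵀ) *ᵥ lam τ) :
    ∀ n ∈ Finset.Icc 1 τ,
      ρ n = -gφ n - Δ • ((Kᵀ * V) *ᵥ
        ∑ k ∈ Finset.Icc n τ,
          (prodIcc Γ n k * V⁻¹) *ᵥ (gξ k + (J k)ᵀ *ᵥ gφ k)) := by
  set A : ℕ → Matrix (Fin m) (Fin m) ℝ :=
    fun n => Δ⁻¹ • V - (N n)ᵀ - (J n)ᵀ * Kᵀ * V with hA
  set g : ℕ → Fin m → ℝ := fun k => gξ k + (J k)ᵀ *ᵥ gφ k with hg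
  have hΔ0 : Δ ≠ 0 := ne_of_gt hΔ
  have hρ : ∀ n, 1 ≤ n → n ≤ τ → ρ n = -(gφ n + (Kᵀ * V) *ᵥ lam n) := by
    intro n h1 h2
    have := hstat1 n (Finset.mem_Icc.mpr ⟨h1, h2⟩)
    linear_combination (norm := module) -this
  have hJρ : ∀ n, 1 ≤ n → n ≤ τ →
      (J n)ᵀ *ᵥ ρ n = -((J n)ᵀ *ᵥ gφ n) - ((J n)ᵀ * Kᵀ * V) *ᵥ lam n := by
    intro n h1 h2
    rw [hρ n h1 h2]
    rw [show (J n)ᵀ *ᵥ -(gφ n + (Kᵀ * V) *ᵥ lam n)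
        = -((J n)ᵀ *ᵥ gφ n) - (J n)ᵀ *ᵥ ((Kᵀ * V) *ᵥ lam n) by
      rw [Matrix.mulVec_neg, Matrix.mulVec_add]; module]
    rw [Matrix.mulVec_mulVec, Matrix.mul_assoc]
  have hAinv : ∀ n, (A n)⁻¹ = Δ • (Γ n * V⁻¹) := by
    intro n
    rw [hΓ n, Matrix.smul_mul, smul_smul, mul_inv_cancel₀ hΔ0, one_smul,
      Matrix.mul_assoc, Matrix.mul_nonsing_inv V hV, Matrix.mul_one]
  have key : ∀ d n, n + d = τ → 1 ≤ n →
      lam n = Δ • ∑ k ∈ Finset.Icc n τ, (prodIcc Γ n k * V⁻¹) *ᵥ g k := by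
    intro d
    induction d with
    | zero =>
      intro n hn h1
      have hnτ : n = τ := by omega
      subst hnτ
      have hmem : n ∈ Finset.Icc 1 n := Finset.mem_Icc.mpr ⟨h1, le_refl n⟩
      have heq : A n *ᵥ lam n = g n := by
        have h2 := hstat3
        rw [hJρ n h1 le_rfl] at h2
        have hexp : (A n) *ᵥ lam n = (Δ⁻¹ • V - (N n)ᵀ) *ᵥ lam n
            - ((J n)ᵀ * Kᵀ * V) *ᵥ lam n := by
          rw [hA]; rw [Matrix.sub_mulVec]
        rw [hexp]
        simp only [hg]
        linear_combination (norm := module) h2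
      have hthis := congrArg (fun v => (A n)⁻¹ *ᵥ v) heq
      simp only [Matrix.mulVec_mulVec, Matrix.nonsing_inv_mul (A n) (hinv n hmem),
        Matrix.one_mulVec] at hthis
      rw [hthis, hAinv n, Finset.Icc_self, Finset.sum_singleton,
        prodIcc_self, Matrix.smul_mulVec]
    | succ d ih =>
      intro n hn h1
      have hnτ : n < τ := by omega
      have hmem : n ∈ Finset.Icc 1 τ := Finset.mem_Icc.mpr ⟨h1, le_of_lt hnτ⟩
      have heq : A n *ᵥ lam n = g n + Δ⁻¹ • (V *ᵥ lam (n + 1)) := by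
        have h2 := hstat2 n h1 hnτ
        rw [hJρ n h1 (le_of_lt hnτ)] at h2
        have hexp : (A n) *ᵥ lam n = (Δ⁻¹ • V - (N n)ᵀ) *ᵥ lam n
            - ((J n)ᵀ * Kᵀ * V) *ᵥ lam n := by
          rw [hA]; rw [Matrix.sub_mulVec]
        rw [hexp]
        simp only [hg]
        linear_combination (norm := module) h2
      have hlam : lam n = (A n)⁻¹ *ᵥ (g n + Δ⁻¹ • (V *ᵥ lam (n + 1))) := by
        have hthis := congrArg (fun v => (A n)⁻¹ *ᵥ v) heq
        simp only [Matrix.mulVec_mulVec, Matrix.nonsing_inv_mul (A n) (hinv n hmem),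
          Matrix.one_mulVec] at hthis
        exact hthis
      have ihn : lam (n + 1) =
          Δ • ∑ k ∈ Finset.Icc (n + 1) τ, (prodIcc Γ (n + 1) k * V⁻¹) *ᵥ g k :=
        ih (n + 1) (by omega) (by omega)
      rw [hlam, hAinv n, ihn]
      have tail : (Δ • (Γ n * V⁻¹)) *ᵥ (Δ⁻¹ • (V *ᵥ (Δ •
            ∑ k ∈ Finset.Icc (n + 1) τ, (prodIcc Γ (n + 1) k * V⁻¹) *ᵥ g k)))
          = Δ • ∑ k ∈ Finset.Icc (n + 1) τ, (prodIcc Γ n k * V⁻¹) *ᵥ g k := by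
        set S := ∑ k ∈ Finset.Icc (n + 1) τ, (prodIcc Γ (n + 1) k * V⁻¹) *ᵥ g k with hS
        simp only [Matrix.mulVec_smul, Matrix.smul_mulVec, smul_smul,
          Matrix.mulVec_mulVec, Matrix.smul_mul]
        rw [Matrix.mul_assoc, Matrix.nonsing_inv_mul V hV, Matrix.mul_one]
        rw [show Δ⁻¹ * Δ * Δ = Δ from by field_simp]
        congr 1
        rw [hS, mulVec_finset_sum]
        refine Finset.sum_congr rfl fun k hk => ?_
        have hk' : n < k := by
          have := (Finset.mem_Icc.mp hk).1; omega
        rw [Matrix.mulVec_mulVec, ← Matrix.mul_assoc, ← prodIcc_cons Γ n k hk']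
      rw [Matrix.mulVec_add, tail]
      rw [Finset.Icc_eq_cons_Ioc (le_of_lt hnτ), Finset.sum_cons,
        ← Finset.Icc_add_one_left_eq_Ioc, prodIcc_self, Matrix.smul_mulVec, smul_add]
  intro n hn
  obtain ⟨h1, h2⟩ := Finset.mem_Icc.mp hn
  rw [hρ n h1 h2, key (τ - n) n (by omega) h1, Matrix.mulVec_smul]
  module
end
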